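/- arXiv:0805.1479 — 2 statements merged into one kernel-verified Lean document; each statement's English description precedes it below -/
import Mathlib

section
/- If î ∈ Z_m satisfies î² ≡ −1 (mod m), then there exists a unique pair of positive integers (b, c) with m = b² + c², gcd(b, c) = 1, and b ≡ −î·c (mod m). -/
private lemma thue (m : ℕ) (hm : 3 ≤ m) (i : ℤ) :
    ∃ x y : ℤ, ((x : ZMod m) = (i : ZMod m) * (y : ZMod m)) ∧ x ^ 2 ≤ m ∧ y ^ 2 ≤ m ∧
      ¬(x = 0 ∧ y = 0) := by
  haveI : NeZero m := ⟨by omega⟩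
  set n := Nat.sqrt m with hn
  have hcard : (Finset.univ : Finset (ZMod m)).card <
      ((Finset.range (n+1)) ×ˢ (Finset.range (n+1))).card := by
    rw [Finset.card_product, Finset.card_range, Finset.card_univ, ZMod.card]
    have := Nat.lt_succ_sqrt m
    simpa [Nat.succ_eq_add_one] using this
  obtain ⟨p, hp, q, hq, hpq, hfeq⟩ :=
    Finset.exists_ne_map_eq_of_card_lt_of_maps_to hcard
      (f := fun p : ℕ × ℕ => (p.1 : ZMod m) - (i : ZMod m) * (p.2 : ZMod m))
      (fun a _ => Finset.mem_univ _)
  simp only [Finset.mem_product, Finset.mem_range] at hp hq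
  refine ⟨(p.1 : ℤ) - q.1, (p.2 : ℤ) - q.2, ?_, ?_, ?_, ?_⟩
  · push_cast
    linear_combination hfeq
  · have h1 : p.1 ≤ n := by omega
    have h2 : q.1 ≤ n := by omega
    have hnm : (n : ℤ) ^ 2 ≤ m := by
      have := Nat.sqrt_le m
      push_cast
      nlinarith [this]
    nlinarith [h1, h2, hnm, (by exact_mod_cast h1 : (p.1 : ℤ) ≤ n), (by exact_mod_cast h2 : (q.1 : ℤ) ≤ n), Int.natCast_nonneg p.1, Int.natCast_nonneg q.1]
  · have h1 : p.2 ≤ n := by omega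
    have h2 : q.2 ≤ n := by omega
    have hnm : (n : ℤ) ^ 2 ≤ m := by
      have := Nat.sqrt_le m
      push_cast
      nlinarith [this]
    nlinarith [(by exact_mod_cast h1 : (p.2 : ℤ) ≤ n), (by exact_mod_cast h2 : (q.2 : ℤ) ≤ n), Int.natCast_nonneg p.2, Int.natCast_nonneg q.2]
  · rintro ⟨h1, h2⟩
    apply hpq
    have e1 : p.1 = q.1 := by omega
    have e2 : p.2 = q.2 := by omega
    exact Prod.ext e1 e2

lemma exists_rep (m : ℕ) (hm : 3 ≤ m) (i : ℤ) (hi : (m : ℤ) ∣ i ^ 2 + 1) :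
    ∃ B C : ℤ, 0 < B ∧ 0 < C ∧ (m : ℤ) = B ^ 2 + C ^ 2 ∧
      ((B : ZMod m) = -(i : ZMod m) * (C : ZMod m)) := by
  obtain ⟨t, ht⟩ := hi
  have hmz : (m : ℤ) ≠ 0 := by positivity
  haveI : NeZero m := ⟨by omega⟩
  obtain ⟨x, y, hx, hxb, hyb, hxy0⟩ := thue m hm i
  have hi2 : ((i : ZMod m)) ^ 2 = -1 := by
    have : ((i ^ 2 + 1 : ℤ) : ZMod m) = 0 := by
      rw [ht]; push_cast; simp [ZMod.natCast_self]
    push_cast at this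
    linear_combination this
  have hdvd : (m : ℤ) ∣ x ^ 2 + y ^ 2 := by
    rw [← ZMod.intCast_zmod_eq_zero_iff_dvd]
    push_cast
    rw [hx]
    linear_combination ((y : ZMod m)) ^ 2 * hi2
  obtain ⟨k, hk⟩ := hdvd
  have hpos : 0 < x ^ 2 + y ^ 2 := by
    rcases not_and_or.mp hxy0 with h | h
    · positivity
    · positivity
  have hk1 : 1 ≤ k := by nlinarith
  have hk2 : k ≤ 2 := by nlinarith
  have hmdx : (m : ℤ) ∣ x - i * y := by
    rw [← ZMod.intCast_zmod_eq_zero_iff_dvd]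
    push_cast
    rw [hx]; ring
  obtain ⟨u, hu⟩ := hmdx
  -- rule out k = 2
  have hk1' : k = 1 := by
    by_contra hne
    have hk2' : k = 2 := by omega
    rw [hk2'] at hk
    have hx2 : x ^ 2 = m := by nlinarith
    have hy2 : y ^ 2 = m := by nlinarith
    have hxne : x ≠ 0 := by intro h; rw [h] at hx2; simp at hx2; omega
    have hcases : (y - x) * (y + x) = 0 := by nlinarith
    have hxd2 : x ∣ 2 := by
      rcases mul_eq_zero.mp hcases with h | h
      · -- y = x : x(1 - i) = x^2 * u, so 1 - i = x * u
        have hyx : y = x := by linarith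
        have hcan : 1 - i = x * u := by
          have : x * (1 - i) = x * (x * u) := by
            rw [hyx] at hu; rw [← hx2] at hu; linear_combination hu
          exact mul_left_cancel₀ hxne this
        -- 2 = (i^2+1) + (1-i)*(1+i)
        refine ⟨x * t + u * (1 + i), ?_⟩
        calc (2 : ℤ) = (i ^ 2 + 1) + (1 - i) * (1 + i) := by ring
        _ = x * (x * t) + x * (u * (1 + i)) := by
            rw [ht, ← hx2, hcan]; ring
        _ = x * (x * t + u * (1 + i)) := by ring
      · -- y = -x : x(1 + i) = x^2 * u
        have hyx : y = -x := by linarith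
        have hcan : 1 + i = x * u := by
          have : x * (1 + i) = x * (x * u) := by
            rw [hyx] at hu; rw [← hx2] at hu; linear_combination hu
          exact mul_left_cancel₀ hxne this
        refine ⟨x * t + u * (1 - i), ?_⟩
        calc (2 : ℤ) = (i ^ 2 + 1) + (1 + i) * (1 - i) := by ring
        _ = x * (x * t) + x * (u * (1 - i)) := by
            rw [ht, ← hx2, hcan]; ring
        _ = x * (x * t + u * (1 - i)) := by ring
    have h4 : (m : ℤ) ∣ 4 := by
      rw [← hx2]
      have := mul_dvd_mul hxd2 hxd2
      simpa [pow_two] using this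
    have hm4 : (m : ℤ) ≤ 4 := Int.le_of_dvd (by norm_num) h4
    have hm34 : m = 3 ∨ m = 4 := by omega
    rcases hm34 with h3 | h4'
    · rw [h3] at h4; norm_num at h4
    · rw [h4'] at ht
      rcases Int.even_or_odd i with ⟨j, hj⟩ | ⟨j, hj⟩
      · have : 4 * (j * j) + 1 = 4 * t := by rw [hj] at ht; push_cast at ht; linear_combination ht
        omega
      · have : 4 * (j * j) + 4 * j + 2 = 4 * t := by rw [hj] at ht; push_cast at ht; linear_combination ht
        omega
  rw [hk1', mul_one] at hk
  -- x ≠ 0 and y ≠ 0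
  have hcop : IsCoprime (m : ℤ) i := ⟨t, -i, by linear_combination -ht⟩
  have hyne : y ≠ 0 := by
    intro h
    rw [h] at hk hu
    have hxne : x ≠ 0 := by intro h'; exact hxy0 ⟨h', h⟩
    have hdx : (m : ℤ) ∣ x := ⟨u, by linear_combination hu⟩
    have := Int.le_of_dvd (abs_pos.mpr hxne) ((dvd_abs _ _).mpr hdx)
    nlinarith [sq_abs x]
  have hxne : x ≠ 0 := by
    intro h
    rw [h] at hk hu
    have hdiy : (m : ℤ) ∣ i * y := ⟨-u, by linear_combination -hu⟩
    have hdy : (m : ℤ) ∣ y := hcop.dvd_of_dvd_mul_left hdiy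
    have := Int.le_of_dvd (abs_pos.mpr hyne) ((dvd_abs _ _).mpr hdy)
    nlinarith [sq_abs y]
  rcases lt_or_gt_of_ne hxne with hxneg | hxpos <;>
    rcases lt_or_gt_of_ne hyne with hyneg | hypos
  · -- x<0, y<0 : B = -y, C = -x
    refine ⟨-y, -x, by linarith, by linarith, by linarith [hk], ?_⟩
    push_cast
    linear_combination -((y : ZMod m)) * hi2 - (i : ZMod m) * hx
  · -- x<0, y>0 : B = -x, C = y
    refine ⟨-x, y, by linarith, by linarith, by linarith [hk], ?_⟩
    push_cast
    linear_combination -hx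
  · -- x>0, y<0 : B = x, C = -y
    refine ⟨x, -y, by linarith, by linarith, by linarith [hk], ?_⟩
    push_cast
    linear_combination hx
  · -- x>0, y>0 : B = y, C = x
    refine ⟨y, x, by linarith, by linarith, by linarith [hk], ?_⟩
    push_cast
    linear_combination ((y : ZMod m)) * hi2 + (i : ZMod m) * hx

lemma coprime_rep (m : ℕ) (hm : 3 ≤ m) (i t : ℤ) (ht : i ^ 2 + 1 = m * t)
    (B C : ℤ) (hB : 0 < B) (hC : 0 < C) (hsum : (m : ℤ) = B ^ 2 + C ^ 2)
    (hcong : (m : ℤ) ∣ B + i * C) : Int.gcd B C = 1 := by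
  set g : ℕ := Int.gcd B C with hg
  have hgB : (g : ℤ) ∣ B := Int.gcd_dvd_left B C
  have hgC : (g : ℤ) ∣ C := Int.gcd_dvd_right B C
  obtain ⟨B', hB'⟩ := hgB
  obtain ⟨C', hC'⟩ := hgC
  have hgne : (g : ℤ) ≠ 0 := by
    simp only [hg, ne_eq, Int.natCast_eq_zero, Int.gcd_eq_zero_iff]
    rintro ⟨h, -⟩; exact absurd h (by omega)
  have hgpos : (0 : ℤ) < g := lt_of_le_of_ne (by positivity) (Ne.symm hgne)
  set n : ℤ := B' ^ 2 + C' ^ 2 with hn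
  have hmn : (m : ℤ) = g ^ 2 * n := by rw [hsum, hB', hC', hn]; ring
  have hnpos : 0 < n := by nlinarith
  obtain ⟨w, hw⟩ := hcong
  have hw' : B' + i * C' = (g : ℤ) * n * w := by
    have h1 : (g : ℤ) * (B' + i * C') = (g : ℤ) * ((g : ℤ) * n * w) := by
      linear_combination hw - hB' - i * hC' + w * hmn
    exact mul_left_cancel₀ hgne h1
  have key : (1 : ℤ) = g * (w * (B' - i * C') + g * t * C' ^ 2) := by
    have h2 : n = n * (g * (w * (B' - i * C') + g * t * C' ^ 2)) := by
      calc n = (B' + i * C') * (B' - i * C') + (i ^ 2 + 1) * C' ^ 2 := by rw [hn]; ring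
      _ = ((g : ℤ) * n * w) * (B' - i * C') + ((m : ℤ) * t) * C' ^ 2 := by rw [hw', ht]
      _ = n * (g * (w * (B' - i * C') + g * t * C' ^ 2)) := by rw [hmn]; ring
    have := mul_left_cancel₀ (ne_of_gt hnpos) (by linear_combination h2 : n * 1 = n * (g * (w * (B' - i * C') + g * t * C' ^ 2)))
    linarith [this]
  have hgd1 : (g : ℤ) ∣ 1 := ⟨_, key⟩
  have := Int.eq_one_of_dvd_one (by positivity) hgd1
  exact_mod_cast this

set_option maxHeartbeats 1000000 in

lemma uniq_rep (m : ℕ) (hm : 3 ≤ m) (i t : ℤ) (ht : i ^ 2 + 1 = m * t)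
    (b c b' c' : ℕ) (hb : 0 < b) (hc : 0 < c) (hb' : 0 < b') (hc' : 0 < c')
    (hs : m = b ^ 2 + c ^ 2) (hs' : m = b' ^ 2 + c' ^ 2)
    (hg : Nat.gcd b c = 1) (hg' : Nat.gcd b' c' = 1)
    (h1 : (m : ℤ) ∣ b + i * c) (h2 : (m : ℤ) ∣ b' + i * c') : b = b' ∧ c = c' := by
  have hmz : (m : ℤ) ≠ 0 := by positivity
  obtain ⟨u, hu⟩ := h1
  obtain ⟨v, hv⟩ := h2
  have hms : (m : ℤ) = (b : ℤ) ^ 2 + (c : ℤ) ^ 2 := by exact_mod_cast hs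
  have hms' : (m : ℤ) = (b' : ℤ) ^ 2 + (c' : ℤ) ^ 2 := by exact_mod_cast hs'
  set S : ℤ := (b' : ℤ) * u - i * c * v + t * c * c' with hSdef
  set T : ℤ := (c' : ℤ) * u - c * v with hTdef
  have hS : (b : ℤ) * b' + c * c' = m * S := by
    rw [hSdef]; linear_combination (b' : ℤ) * hu - i * (c : ℤ) * hv + (c : ℤ) * c' * ht
  have hT : (b : ℤ) * c' - b' * c = m * T := by
    rw [hTdef]; linear_combination (c' : ℤ) * hu - (c : ℤ) * hv
  have hXY : ((b : ℤ) * b' + c * c') ^ 2 + ((b : ℤ) * c' - b' * c) ^ 2 = (m : ℤ) * m := by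
    linear_combination -(m : ℤ) * hms - ((b : ℤ) ^ 2 + c ^ 2) * hms'
  have hcancel : (m : ℤ) ^ 2 * (S ^ 2 + T ^ 2) = (m : ℤ) ^ 2 * 1 := by
    linear_combination hXY - ((b : ℤ) * b' + c * c' + m * S) * hS -
      ((b : ℤ) * c' - b' * c + m * T) * hT
  clear_value S T
  have hST : S ^ 2 + T ^ 2 = 1 := mul_left_cancel₀ (pow_ne_zero 2 hmz) hcancel
  have hbz : (0 : ℤ) < b := by exact_mod_cast hb
  have hcz : (0 : ℤ) < c := by exact_mod_cast hc
  have hbz' : (0 : ℤ) < b' := by exact_mod_cast hb'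
  have hcz' : (0 : ℤ) < c' := by exact_mod_cast hc'
  have hmpos : (0 : ℤ) < m := by positivity
  have hXpos : (0 : ℤ) < (b : ℤ) * b' + c * c' := by positivity
  have hSpos : 0 < S := by
    rcases le_or_gt S 0 with h | h
    · exfalso
      have : (m : ℤ) * S ≤ 0 := mul_nonpos_of_nonneg_of_nonpos (le_of_lt hmpos) h
      linarith [hS ▸ hXpos]
    · exact h
  have hS1 : S = 1 := by nlinarith [sq_nonneg T, hST, hSpos]
  have hT0 : T = 0 := by
    have : T ^ 2 = 0 := by nlinarith [hST, hS1]
    exact pow_eq_zero_iff (by norm_num) |>.mp this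
  have hY : (b : ℤ) * c' = b' * c := by rw [hT0, mul_zero] at hT; linarith
  have hYnat : b * c' = b' * c := by exact_mod_cast hY
  have hd1 : b ∣ b' := Nat.Coprime.dvd_of_dvd_mul_right hg ⟨c', hYnat.symm⟩
  have hd2 : b' ∣ b := Nat.Coprime.dvd_of_dvd_mul_right hg' ⟨c, hYnat⟩
  have hbb : b = b' := Nat.dvd_antisymm hd1 hd2
  refine ⟨hbb, ?_⟩
  have hcc2 : c ^ 2 = c' ^ 2 := by rw [hbb] at hs; omega
  exact Nat.pow_left_injective (by norm_num) hcc2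

/-- If `î² ≡ −1 (mod m)`, then there is a unique pair of positive integers `(b, c)`
with `m = b² + c²`, `gcd(b, c) = 1` and `b ≡ −î·c (mod m)`. -/
theorem unique_sum_of_squares (m : ℕ) (hm : 3 ≤ m) (i : ℤ)
    (hi : (m : ℤ) ∣ i ^ 2 + 1) :
    ∃! p : ℕ × ℕ, 0 < p.1 ∧ 0 < p.2 ∧ m = p.1 ^ 2 + p.2 ^ 2 ∧
      Nat.gcd p.1 p.2 = 1 ∧ ((p.1 : ZMod m) = -(i : ZMod m) * (p.2 : ZMod m)) := by
  obtain ⟨t, ht⟩ := hi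
  have hmz : (m : ℤ) ≠ 0 := by positivity
  haveI : NeZero m := ⟨by omega⟩
  obtain ⟨B, C, hB, hC, hsum, hcong⟩ := exists_rep m hm i ⟨t, ht⟩
  set b : ℕ := B.toNat with hbdef
  set c : ℕ := C.toNat with hcdef
  have hbB : (b : ℤ) = B := Int.toNat_of_nonneg (le_of_lt hB)
  have hcC : (c : ℤ) = C := Int.toNat_of_nonneg (le_of_lt hC)
  have hbpos : 0 < b := by omega
  have hcpos : 0 < c := by omega
  have hsumn : m = b ^ 2 + c ^ 2 := by
    have : (m : ℤ) = (b : ℤ) ^ 2 + (c : ℤ) ^ 2 := by rw [hbB, hcC]; exact hsum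
    exact_mod_cast this
  have hzmod : ((b : ZMod m)) = -(i : ZMod m) * (c : ZMod m) := by
    have h1 : ((b : ℤ) : ZMod m) = ((B : ℤ) : ZMod m) := by rw [hbB]
    have h2 : ((c : ℤ) : ZMod m) = ((C : ℤ) : ZMod m) := by rw [hcC]
    push_cast at h1 h2
    rw [h1, h2]; exact hcong
  have hdvdbc : (m : ℤ) ∣ (b : ℤ) + i * c := by
    rw [← ZMod.intCast_zmod_eq_zero_iff_dvd]
    push_cast
    rw [hzmod]; ring
  have hgcd : Nat.gcd b c = 1 := by
    have := coprime_rep m hm i t ht (b : ℤ) (c : ℤ) (by exact_mod_cast hbpos)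
      (by exact_mod_cast hcpos) (by exact_mod_cast hsumn) hdvdbc
    simpa [Int.gcd_natCast_natCast] using this
  refine ⟨(b, c), ⟨hbpos, hcpos, hsumn, hgcd, hzmod⟩, ?_⟩
  rintro ⟨b', c'⟩ ⟨hb', hc', hs', hg', hz'⟩
  have hdvd' : (m : ℤ) ∣ (b' : ℤ) + i * c' := by
    rw [← ZMod.intCast_zmod_eq_zero_iff_dvd]
    push_cast
    rw [hz']; ring
  obtain ⟨e1, e2⟩ := uniq_rep m hm i t ht b' c' b c hb' hc' hbpos hcpos hs' hsumn
    hg' hgcd hdvd' hdvdbc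
  simp [e1, e2]
end

section
/- Let π = a + bτ ∈ Z[τ] be a prime with N(π) = a² + ab − b² = q for a rational prime q ≡ ±1 (mod 5), and π not an associate of δ = −(2+5τ). Then in the field Z[τ]/(π) ≅ GF(q), δ is congruent to a square times (5ab − 2b²); in particular the quadratic character of δ mod π equals the product of Legendre symbols (b | q)·((5a − 2b) | q). -/
noncomputable def tau : ℝ := (1 + Real.sqrt 5) / 2

noncomputable def Ztau : Subring ℝ := Subring.closure {tau}

noncomputable def tauZ : Ztau := ⟨tau, Subring.subset_closure (Set.mem_singleton tau)⟩

set_option maxHeartbeats 2000000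
set_option synthInstance.maxHeartbeats 400000

lemma tauZ_sq : tauZ ^ 2 = tauZ + 1 := by
  have h5 : Real.sqrt 5 ^ 2 = 5 := Real.sq_sqrt (by norm_num)
  apply Subtype.ext
  push_cast
  show tau ^ 2 = tau + 1
  unfold tau
  nlinarith [h5]

/-- Let `π = a + bτ` be prime in `ℤ[τ]` with `N(π) = a² + ab − b² = q` a rational
prime `q ≡ ±1 (mod 5)`, and `π` not an associate of `δ = −(2 + 5τ)`.  Then in
`ℤ[τ]/(π)`, `δ` is a square times `5ab − 2b²`; in particular, `δ` is a square
mod `π` iff the product of Legendre symbols `(b|q)·((5a − 2b)|q)` equals `1`. -/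
theorem delta_character_mod_pi (a b : ℤ) (q : ℕ) [Fact q.Prime]
    (h5 : q % 5 = 1 ∨ q % 5 = 4) (hN : a ^ 2 + a * b - b ^ 2 = (q : ℤ))
    (hπ : Prime ((a : Ztau) + (b : Ztau) * tauZ))
    (hassoc : ¬ Associated ((a : Ztau) + (b : Ztau) * tauZ) (-(2 + 5 * tauZ) : Ztau)) :
    (∃ s : Ztau ⧸ Ideal.span {(a : Ztau) + (b : Ztau) * tauZ},
        Ideal.Quotient.mk (Ideal.span {(a : Ztau) + (b : Ztau) * tauZ}) (-(2 + 5 * tauZ)) =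
          s ^ 2 * Ideal.Quotient.mk (Ideal.span {(a : Ztau) + (b : Ztau) * tauZ})
            ((5 * a * b - 2 * b ^ 2 : ℤ) : Ztau)) ∧
    (IsSquare (Ideal.Quotient.mk (Ideal.span {(a : Ztau) + (b : Ztau) * tauZ})
        (-(2 + 5 * tauZ))) ↔ legendreSym q b * legendreSym q (5 * a - 2 * b) = 1) := by
  set π : Ztau := (a : Ztau) + (b : Ztau) * tauZ with hπdef
  set I : Ideal Ztau := Ideal.span {π} with hIdef
  set mk : Ztau →+* Ztau ⧸ I := Ideal.Quotient.mk I with hmkdef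
  set J : ℤ →+* Ztau ⧸ I := mk.comp (Int.castRingHom Ztau) with hJdef
  have hJmk : ∀ n : ℤ, J n = mk ((n:ℤ):Ztau) := fun _ => rfl
  have hqp : Prime (q:ℤ) := Nat.prime_iff_prime_int.mp Fact.out
  have hq2 : 2 ≤ q := (Fact.out : q.Prime).two_le
  have hNZ : ((a:Ztau))^2 + (a:Ztau)*(b:Ztau) - (b:Ztau)^2 = ((q:ℤ):Ztau) := by
    exact_mod_cast congrArg (fun n : ℤ => (n : Ztau)) hN
  have hbar : π * ((a:Ztau) + (b:Ztau) - (b:Ztau)*tauZ) = ((q:ℤ):Ztau) := by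
    rw [hπdef]; linear_combination hNZ - (b:Ztau)^2 * tauZ_sq
  have hmkπ : mk π = 0 := Ideal.Quotient.eq_zero_iff_mem.mpr (Ideal.subset_span rfl)
  have hJq : mk ((q:ℤ):Ztau) = 0 := by rw [← hbar, map_mul, hmkπ, zero_mul]
  -- q does not divide b
  have hbq : ¬ ((q:ℤ) ∣ b) := by
    intro h
    have ha2 : (q:ℤ) ∣ a^2 := by
      have he : a^2 = (q:ℤ) - a*b + b^2 := by linarith
      rw [he]
      exact dvd_add (dvd_sub dvd_rfl (h.mul_left a)) (by rw [sq]; exact h.mul_left b)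
    have ha : (q:ℤ) ∣ a := hqp.dvd_of_dvd_pow ha2
    have hq2d : (q:ℤ)^2 ∣ (a^2 + a*b - b^2) := by
      have h1 : (q:ℤ)^2 ∣ a^2 := pow_dvd_pow_of_dvd ha 2
      have h2 : (q:ℤ)^2 ∣ a*b := by rw [sq]; exact mul_dvd_mul ha h
      have h3 : (q:ℤ)^2 ∣ b^2 := pow_dvd_pow_of_dvd h 2
      exact dvd_sub (dvd_add h1 h2) h3
    rw [hN] at hq2d
    have hle := Int.le_of_dvd (by positivity) hq2d
    have : (2:ℤ) ≤ q := by exact_mod_cast hq2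
    nlinarith
  -- q does not divide 5a - 2b (else π would be associated to δ)
  have h52 : ¬ ((q:ℤ) ∣ (5*a - 2*b)) := by
    intro hd
    have h11 : (q:ℤ) ∣ 11 * b^2 := by
      have he : 11*b^2 = (5*a-2*b)*(5*a+7*b) - 25*(q:ℤ) := by linear_combination (-25)*hN
      rw [he]
      exact dvd_sub (hd.mul_right _) (Dvd.dvd.mul_left dvd_rfl 25)
    rcases hqp.2.2 _ _ h11 with h | h
    swap
    · exact hbq (hqp.dvd_of_dvd_pow h)
    have hq11 : q = 11 := by
      have : (q:ℤ) ∣ ((11:ℕ):ℤ) := by exact_mod_cast h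
      exact (Nat.prime_dvd_prime_iff_eq Fact.out (by norm_num)).mp (Int.ofNat_dvd.mp this)
    subst hq11
    have hN' : a^2 + a*b - b^2 = (11:ℤ) := by exact_mod_cast hN
    have hd' : (11:ℤ) ∣ 5*a - 2*b := by exact_mod_cast hd
    obtain ⟨k, hk0⟩ := hd'
    have hk : 11*k = 5*a - 2*b := by linarith
    set c : ℤ := 7*k - 3*a + b with hcdef
    have hc : 11*c = 2*a - 3*b := by rw [hcdef]; linarith
    have h22 : 11*(a*c + b*k) = 11*2 := by linear_combination a*hc + b*hk + 2*hN'
    have h55 : 11*(a*k + b*c + b*k) = 11*5 := by linear_combination b*hc + (a+b)*hk + 5*hN'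
    have h121 : 121*(c^2 + c*k - k^2) = 121*(-1) := by
      linear_combination (11*c + 2*a - 3*b + 11*k)*hc + (-3*a - b - 11*k)*hk + (-11)*hN'
    have ci : (a:ℤ)*c + b*k = 2 := by linarith
    have cii : a*k + b*c + b*k = 5 := by linarith
    have ciii : c^2 + c*k - k^2 = -1 := by linarith
    have ciZ : (a:Ztau)*(c:Ztau) + (b:Ztau)*(k:Ztau) = 2 := by
      exact_mod_cast congrArg (fun n : ℤ => (n : Ztau)) ci
    have ciiZ : (a:Ztau)*(k:Ztau) + (b:Ztau)*(c:Ztau) + (b:Ztau)*(k:Ztau) = 5 := by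
      exact_mod_cast congrArg (fun n : ℤ => (n : Ztau)) cii
    have ciiiZ : (c:Ztau)^2 + (c:Ztau)*(k:Ztau) - (k:Ztau)^2 = -1 := by
      exact_mod_cast congrArg (fun n : ℤ => (n : Ztau)) ciii
    set w : Ztau := -((c:Ztau) + (k:Ztau)*tauZ) with hwdef
    have hπw : π * w = -(2 + 5*tauZ) := by
      rw [hwdef, hπdef]
      linear_combination (-1)*ciZ - tauZ*ciiZ - (b:Ztau)*(k:Ztau)*tauZ_sq
    have hwu : w * ((c:Ztau) + (k:Ztau) - (k:Ztau)*tauZ) = 1 := by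
      rw [hwdef]
      linear_combination (-1)*ciiiZ + (k:Ztau)^2*tauZ_sq
    exact hassoc ⟨⟨w, _, hwu, by rw [mul_comm] at hwu; exact hwu⟩, hπw⟩
  -- Bezout
  obtain ⟨u, v, huv⟩ := (hqp.coprime_iff_not_dvd.mpr hbq : IsCoprime (q:ℤ) b)
  have hbv : (b:Ztau)*(v:Ztau) = 1 - (u:Ztau)*((q:ℤ):Ztau) := by
    have : b*v = 1 - u*(q:ℤ) := by linarith
    exact_mod_cast congrArg (fun n : ℤ => (n : Ztau)) this
  have htau : mk tauZ = J (-(a*v)) := by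
    have h1 : tauZ = ((-(a*v) : ℤ) : Ztau) + (v:Ztau) * π + (tauZ*(u:Ztau))*((q:ℤ):Ztau) := by
      rw [hπdef]
      push_cast
      linear_combination (-tauZ) * hbv
    rw [h1, map_add, map_add, map_mul, map_mul, hmkπ, hJq, mul_zero, mul_zero, add_zero, add_zero]
    rfl
  have hsurj : Function.Surjective J := by
    have key : ∀ (x : ℝ) (hx : x ∈ Subring.closure {tau}), ∃ n : ℤ, mk ⟨x, hx⟩ = J n := by
      intro x hx
      induction hx using Subring.closure_induction with
      | mem y hy =>
          rcases hy with rfl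
          exact ⟨-(a*v), htau⟩
      | zero => exact ⟨0, show mk 0 = J 0 by rw [map_zero, map_zero]⟩
      | one => exact ⟨1, show mk 1 = J 1 by rw [map_one, map_one]⟩
      | add x y hx hy ihx ihy =>
          obtain ⟨m, hm⟩ := ihx; obtain ⟨n, hn⟩ := ihy
          exact ⟨m + n, by rw [show (⟨x + y, _⟩ : Ztau) = (⟨x, hx⟩ : Ztau) + ⟨y, hy⟩ from rfl,
            map_add, hm, hn, map_add]⟩
      | neg x hx ihx =>
          obtain ⟨m, hm⟩ := ihx
          exact ⟨-m, by rw [show (⟨-x, _⟩ : Ztau) = -(⟨x, hx⟩ : Ztau) from rfl, map_neg, hm, map_neg]⟩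
      | mul x y hx hy ihx ihy =>
          obtain ⟨m, hm⟩ := ihx; obtain ⟨n, hn⟩ := ihy
          exact ⟨m * n, by rw [show (⟨x * y, _⟩ : Ztau) = (⟨x, hx⟩ : Ztau) * ⟨y, hy⟩ from rfl,
            map_mul, hm, hn, map_mul]⟩
    intro z
    obtain ⟨x, rfl⟩ := Ideal.Quotient.mk_surjective z
    obtain ⟨n, hn⟩ := key x.1 x.2
    exact ⟨n, hn.symm⟩
  have hItop : I ≠ ⊤ := by
    rw [hIdef, Ne, Ideal.span_singleton_eq_top]
    exact hπ.not_unit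
  haveI : Nontrivial (Ztau ⧸ I) := Ideal.Quotient.nontrivial_iff.mpr hItop
  have hker : Ideal.span {(q:ℤ)} = RingHom.ker J := by
    have hle : Ideal.span {(q:ℤ)} ≤ RingHom.ker J := by
      rw [Ideal.span_le, Set.singleton_subset_iff]
      exact hJq
    have hmax : (Ideal.span {(q:ℤ)}).IsMaximal :=
      PrincipalIdealRing.isMaximal_of_irreducible hqp.irreducible
    refine hmax.eq_of_le ?_ hle
    intro h
    have : J 1 = 0 := by rw [← RingHom.mem_ker, h]; trivial
    simp at this
  let e : ZMod q ≃+* Ztau ⧸ I :=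
    ((Int.quotientSpanNatEquivZMod q).symm.trans (Ideal.quotEquivOfEq hker)).trans
      (RingHom.quotientKerEquivOfSurjective hsurj)
  have he : ∀ n : ℤ, e ((n : ZMod q)) = J n := by
    intro n
    rw [show ((n : ZMod q)) = ((n : ℤ) : ZMod q) from rfl, map_intCast, eq_intCast]
  -- key congruences
  have hb5 : mk ((b:ℤ):Ztau) * mk (-(2 + 5*tauZ)) = J (5*a - 2*b) := by
    have hid : ((b:ℤ):Ztau) * (-(2 + 5*tauZ)) = ((5*a - 2*b : ℤ):Ztau) + (-5)*π := by
      rw [hπdef]; push_cast; ring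
    rw [← map_mul, hid, map_add, map_mul, hmkπ, mul_zero, add_zero, hJmk]
  have hvb : mk ((v:ℤ):Ztau) * mk ((b:ℤ):Ztau) = 1 := by
    have hid : ((v:ℤ):Ztau) * ((b:ℤ):Ztau) = 1 - (u:Ztau)*((q:ℤ):Ztau) := by
      rw [mul_comm]; exact hbv
    rw [← map_mul, hid, map_sub, map_one, map_mul, hJq, mul_zero, sub_zero]
  have hfive : mk ((5*a*b - 2*b^2 : ℤ):Ztau) = mk ((b:ℤ):Ztau) * J (5*a - 2*b) := by
    have hid : ((5*a*b - 2*b^2 : ℤ):Ztau) = ((b:ℤ):Ztau) * ((5*a - 2*b : ℤ):Ztau) := by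
      push_cast; ring
    rw [hid, map_mul, hJmk]
  have hpart1 : mk (-(2 + 5*tauZ)) =
      (mk ((v:ℤ):Ztau))^2 * mk ((5*a*b - 2*b^2 : ℤ):Ztau) := by
    rw [hfive, ← hb5]
    linear_combination (-(mk (-(2 + 5*tauZ))) * (mk ((v:ℤ):Ztau) * mk ((b:ℤ):Ztau) + 1)) * hvb
  refine ⟨⟨mk ((v:ℤ):Ztau), hpart1⟩, ?_⟩
  -- the character computation
  have ht0 : ((b*(5*a - 2*b) : ℤ) : ZMod q) ≠ 0 := by
    rw [Ne, ZMod.intCast_zmod_eq_zero_iff_dvd]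
    intro h
    rcases hqp.2.2 _ _ h with h | h
    · exact hbq h
    · exact h52 h
  have hJt : J (b*(5*a - 2*b)) = e ((b*(5*a - 2*b) : ℤ) : ZMod q) := (he _).symm
  have hfive' : mk ((5*a*b - 2*b^2 : ℤ):Ztau) = J (b*(5*a - 2*b)) := by
    have : ((5*a*b - 2*b^2 : ℤ):Ztau) = ((b*(5*a - 2*b) : ℤ):Ztau) := by push_cast; ring
    rw [this, hJmk]
  rw [show legendreSym q b * legendreSym q (5 * a - 2 * b) = legendreSym q (b*(5*a-2*b)) from
    (legendreSym.mul q b (5*a-2*b)).symm,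
    legendreSym.eq_one_iff q ht0]
  constructor
  · rintro ⟨r, hr⟩
    have hsq : e ((b*(5*a - 2*b) : ℤ) : ZMod q) = (mk ((b:ℤ):Ztau) * r) * (mk ((b:ℤ):Ztau) * r) := by
      rw [← hJt, ← hfive', hfive, ← hb5, hr]
      ring
    refine ⟨e.symm (mk ((b:ℤ):Ztau) * r), ?_⟩
    have := congrArg e.symm hsq
    rwa [RingEquiv.symm_apply_apply, map_mul] at this
  · rintro ⟨r, hr⟩
    refine ⟨mk ((v:ℤ):Ztau) * e r, ?_⟩
    rw [hpart1, hfive', hJt, hr, map_mul]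
    ring
end
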